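/- Let G be a finite simple d-regular graph on n vertices with d ≥ 2, and let λ₁, …, λₙ be the eigenvalues (with multiplicity) of the adjacency matrix of G over the reals. Then the multiset of eigenvalues (with multiplicity) of the adjacency matrix of the symmetric lift HL'₂(G) is {d − 2 + λᵢ : i = 1, …, n} ∪ {d − 2 − λᵢ : i = 1, …, n} ∪ {−2 repeated n(d − 2) times}. Equivalently, writing p(X) for the characteristic polynomial of the adjacency matrix of G, the characteristic polynomial of the adjacency matrix of HL'₂(G) equals (−1)ⁿ (X + 2)^{n(d−2)} · p(X − (d − 2)) · p((d − 2) − X). -/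

import Mathlib

open SimpleGraph

/-- The symmetric lift `HL'₂(G)`: vertices are ordered pairs `(u,v)` with `{u,v}` an edge of `G`;
distinct vertices `(u,v)` and `(x,y)` are adjacent iff `u = x` or `v = y`. -/
def symLift {V : Type*} (G : SimpleGraph V) : SimpleGraph {p : V × V // G.Adj p.1 p.2} where
  Adj a b := a ≠ b ∧ (a.val.1 = b.val.1 ∨ a.val.2 = b.val.2)
  symm := ⟨fun _ _ h => ⟨h.1.symm, h.2.imp Eq.symm Eq.symm⟩⟩
  loopless := ⟨fun _ h => h.1 rfl⟩

/-!
Let `U` be the incidence matrix of the bipartite double cover of `G`, with rows indexed by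
the darts `(u, v)` and columns by `V ⊕ V`: the dart `(u, v)` is the edge joining the left copy
of `u` to the right copy of `v`. Two darts share an endpoint in the double cover exactly when
they are adjacent in `HL'₂(G)`, so `U Uᵀ = A(HL'₂(G)) + 2I`. If `G` is `d`-regular with
adjacency matrix `A`, then `Uᵀ U = [[dI, A], [A, dI]]`, which is similar to a block triangular
matrix with diagonal blocks `dI + A` and `dI - A`. Finally `U Uᵀ` and `Uᵀ U` have the same
characteristic polynomial up to the factor `X ^ (nd - 2n)`.
-/

open Matrix Polynomial

namespace Matrix

section Charpoly

variable {n R : Type*} [Fintype n] [DecidableEq n] [CommRing R]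

theorem charpoly_neg (M : Matrix n n R) :
    (-M).charpoly = (-1) ^ Fintype.card n * M.charpoly.comp (-X) := by
  have hmap : (charmatrix M).map (compRingHom (-X)) = -charmatrix (-M) := by
    ext i j : 1
    by_cases hij : i = j <;> simp [hij]
    ring
  have hcomp : M.charpoly.comp (-X) = (-1) ^ Fintype.card n * (-M).charpoly := by
    rw [charpoly, ← coe_compRingHom_apply, RingHom.map_det, RingHom.mapMatrix_apply, hmap,
      det_neg, charpoly]
  rw [hcomp, ← mul_assoc, ← pow_add, ← two_mul, pow_mul, neg_one_sq, one_pow, one_mul]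

theorem charpoly_scalar_add (M : Matrix n n R) (c : R) :
    (scalar n c + M).charpoly = M.charpoly.comp (X - C c) := by
  simpa [sub_eq_add_neg, add_comm] using charpoly_sub_scalar M (-c)

theorem charpoly_scalar_sub (M : Matrix n n R) (c : R) :
    (scalar n c - M).charpoly = (-1) ^ Fintype.card n * M.charpoly.comp (C c - X) := by
  rw [sub_eq_add_neg, charpoly_scalar_add, charpoly_neg, mul_comp, comp_assoc]
  simp

theorem charpoly_fromBlocks_self (A B : Matrix n n R) :
    (fromBlocks A B B A).charpoly = (A + B).charpoly * (A - B).charpoly := by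
  let P : Matrix (n ⊕ n) (n ⊕ n) R := fromBlocks 1 0 1 1
  let Q : Matrix (n ⊕ n) (n ⊕ n) R := fromBlocks 1 0 (-1) 1
  have hPQ : P * Q = 1 := by simp [P, Q, fromBlocks_multiply]
  have hconj : Q * (fromBlocks A B B A * P) = fromBlocks (A + B) B 0 (A - B) := by
    simp only [P, Q, fromBlocks_multiply, fromBlocks_inj, Matrix.one_mul, Matrix.zero_mul,
      Matrix.mul_one, Matrix.neg_mul, Matrix.mul_zero]
    refine ⟨?_, ?_, ?_, ?_⟩ <;> abel
  rw [← charpoly_fromBlocks_zero₂₁, ← hconj, charpoly_mul_comm, mul_assoc, hPQ, mul_one]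

end Charpoly

variable {ι V : Type*} [DecidableEq V]

def ofFun (R : Type*) [Zero R] [One R] (f : ι → V) : Matrix ι V R :=
  of fun a u => if f a = u then 1 else 0

variable {R : Type*} [NonAssocSemiring R]

theorem ofFun_mul_transpose_ofFun_apply [Fintype V] (f g : ι → V) (a b : ι) :
    (ofFun R f * (ofFun R g)ᵀ) a b = if f a = g b then 1 else 0 := by
  simp [ofFun, mul_apply]

theorem transpose_ofFun_mul_ofFun_apply [Fintype ι] (f g : ι → V) (u v : V) :
    ((ofFun R f)ᵀ * ofFun R g) u v = ∑ a, if f a = u ∧ g a = v then 1 else 0 := by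
  simp only [ofFun, mul_apply, transpose_apply, of_apply, ite_mul, one_mul, zero_mul, ite_and]

end Matrix

namespace SimpleGraph

variable {V : Type*} (G : SimpleGraph V)

@[simp]
theorem symLift_adj {a b : {p : V × V // G.Adj p.1 p.2}} :
    (symLift G).Adj a b ↔ a ≠ b ∧ (a.1.1 = b.1.1 ∨ a.1.2 = b.1.2) :=
  Iff.rfl

variable [Fintype V] [DecidableRel G.Adj]

theorem sum_subtype_adj {R : Type*} [NonAssocSemiring R] (f : V × V → R) :
    ∑ a : {p : V × V // G.Adj p.1 p.2}, f a.1 = ∑ u, ∑ v, f (u, v) * G.adjMatrix R u v := by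
  simp only [adjMatrix_apply, mul_ite, mul_one, mul_zero]
  rw [← Fintype.sum_prod_type', ← Finset.sum_filter]
  exact (Finset.sum_subtype _ (by simp) f).symm

theorem card_subtype_adj : Fintype.card {p : V × V // G.Adj p.1 p.2} = ∑ v, G.degree v := by
  rw [Fintype.card_eq_sum_ones, sum_subtype_adj G fun _ => 1]
  simp [adjMatrix_apply, ← neighborFinset_eq_filter]

variable {G} in
theorem IsRegularOfDegree.card_subtype_adj {d : ℕ} (h : G.IsRegularOfDegree d) :
    Fintype.card {p : V × V // G.Adj p.1 p.2} = Fintype.card V * d := by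
  simp [G.card_subtype_adj, h.degree_eq, mul_comm]

variable [DecidableEq V] (R : Type*)

def symLiftIncMatrix [Zero R] [One R] : Matrix {p : V × V // G.Adj p.1 p.2} (V ⊕ V) R :=
  fromCols (ofFun R fun a => a.1.1) (ofFun R fun a => a.1.2)

theorem adjMatrix_symLift [Ring R] [DecidableRel (symLift G).Adj] :
    (symLift G).adjMatrix R = G.symLiftIncMatrix R * (G.symLiftIncMatrix R)ᵀ - scalar _ 2 := by
  ext a b
  rw [symLiftIncMatrix, transpose_fromCols, fromCols_mul_fromRows]
  simp only [Matrix.sub_apply, Matrix.add_apply, ofFun_mul_transpose_ofFun_apply, scalar_apply,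
    diagonal_apply, adjMatrix_apply, symLift_adj]
  by_cases hab : a = b
  · subst hab
    simp [one_add_one_eq_two]
  · have hne : ¬(a.1.1 = b.1.1 ∧ a.1.2 = b.1.2) := fun h => hab (Subtype.ext (Prod.ext h.1 h.2))
    by_cases h1 : a.1.1 = b.1.1 <;> by_cases h2 : a.1.2 = b.1.2 <;> simp_all

theorem transpose_symLiftIncMatrix_mul [Semiring R] :
    (G.symLiftIncMatrix R)ᵀ * G.symLiftIncMatrix R =
      fromBlocks (diagonal fun v => (G.degree v : R)) (G.adjMatrix R) (G.adjMatrix R)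
        (diagonal fun v => (G.degree v : R)) := by
  rw [symLiftIncMatrix, transpose_fromCols, fromRows_mul_fromCols]
  congr 1 <;> ext u v <;> rw [transpose_ofFun_mul_ofFun_apply]
  · rw [sum_subtype_adj G fun p => if p.1 = u ∧ p.1 = v then 1 else 0]
    simp only [ite_and, ite_mul, one_mul, zero_mul]
    by_cases huv : u = v
    · subst huv
      simp [adjMatrix_apply, ← neighborFinset_eq_filter]
    · simp [huv]
  · rw [sum_subtype_adj G fun p => if p.1 = u ∧ p.2 = v then 1 else 0]
    simp only [ite_and, ite_mul, one_mul, zero_mul]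
    simp
  · rw [sum_subtype_adj G fun p => if p.2 = u ∧ p.1 = v then 1 else 0, Finset.sum_comm]
    simp only [ite_and, ite_mul, one_mul, zero_mul]
    simp [adjMatrix_apply, G.adj_comm]
  · rw [sum_subtype_adj G fun p => if p.2 = u ∧ p.2 = v then 1 else 0, Finset.sum_comm]
    simp only [ite_and, ite_mul, one_mul, zero_mul]
    by_cases huv : u = v
    · subst huv
      simp [adjMatrix_apply, ← neighborFinset_eq_filter, G.adj_comm]
    · simp [huv]

variable {G} in
theorem IsRegularOfDegree.transpose_symLiftIncMatrix_mul [Semiring R] {d : ℕ}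
    (h : G.IsRegularOfDegree d) :
    (G.symLiftIncMatrix R)ᵀ * G.symLiftIncMatrix R =
      fromBlocks (scalar V (d : R)) (G.adjMatrix R) (G.adjMatrix R) (scalar V (d : R)) := by
  simp only [G.transpose_symLiftIncMatrix_mul R, h.degree_eq, scalar_apply]

end SimpleGraph

open Polynomial in
open scoped Classical in
/-- For a `d`-regular graph `G` on `n` vertices with characteristic polynomial `p` of its
adjacency matrix, the characteristic polynomial of the adjacency matrix of the symmetric lift is
`(-1)^n (X + 2)^(n(d-2)) ⬝ p(X - (d-2)) ⬝ p((d-2) - X)`; equivalently, its eigenvalue multiset is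
`{d - 2 + λᵢ} ∪ {d - 2 - λᵢ} ∪ {-2 repeated n(d-2) times}`. -/
theorem stmt_14 {V : Type*} [Fintype V] (G : SimpleGraph V)
    (d : ℕ) (hd : 2 ≤ d) (hreg : G.IsRegularOfDegree d) :
    ((symLift G).adjMatrix ℝ).charpoly =
      (-1) ^ (Fintype.card V) * (X + C 2) ^ (Fintype.card V * (d - 2)) *
        ((G.adjMatrix ℝ).charpoly.comp (X - C ((d : ℝ) - 2))) *
        ((G.adjMatrix ℝ).charpoly.comp (C ((d : ℝ) - 2) - X)) := by
  classical
  set n := Fintype.card V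
  have hcard : Fintype.card {p : V × V // G.Adj p.1 p.2} = n * d := hreg.card_subtype_adj
  have hle : Fintype.card (V ⊕ V) ≤ Fintype.card {p : V × V // G.Adj p.1 p.2} := by
    rw [hcard, Fintype.card_sum, ← two_mul, mul_comm]
    exact Nat.mul_le_mul_left n hd
  have hexp :
      Fintype.card {p : V × V // G.Adj p.1 p.2} - Fintype.card (V ⊕ V) = n * (d - 2) := by
    rw [hcard, Fintype.card_sum, ← two_mul, mul_comm 2 n, mul_tsub]
  have hshift₁ : (X - C (d : ℝ)).comp (X + C 2) = X - C ((d : ℝ) - 2) := by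
    simp only [sub_comp, X_comp, C_comp, C_sub]
    ring
  have hshift₂ : (C (d : ℝ) - X).comp (X + C 2) = C ((d : ℝ) - 2) - X := by
    simp only [sub_comp, X_comp, C_comp, C_sub]
    ring
  rw [adjMatrix_symLift G ℝ, charpoly_sub_scalar, charpoly_mul_comm_of_le _ _ hle,
    hreg.transpose_symLiftIncMatrix_mul ℝ,
    charpoly_fromBlocks_self, charpoly_scalar_add, charpoly_scalar_sub]
  simp only [hexp, mul_comp, pow_comp, X_comp, neg_comp, one_comp, comp_assoc, hshift₁, hshift₂]
  ring
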